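/- Let Φ and φ denote the cumulative distribution function and the density of the standard normal distribution. Let μ ∈ ℝ, q ∈ [0,1], and σ² > 1/4; set σ_∖² = σ² − q(1−q) and μ_∖ = μ − q. For any real l, put I = (l + 1/2 − μ)/σ and I_∖ = (l + 1/2 − μ_∖)/σ_∖. Then |Φ(I) − Φ(I_∖)| ≤ (1/(4√(2π))) · 1/(√e (σ² − 1/4)) + (1/√(2π)) · 1/√(σ² − 1/4). -/

import Mathlib

open Real

/-- The standard normal cumulative distribution function
`Φ(u) = ∫_{-∞}^{u} (1/√(2π)) e^{-t²/2} dt`. -/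
noncomputable def stdNormalCDF (u : ℝ) : ℝ :=
  ∫ t in Set.Iio u, (1 / Real.sqrt (2 * Real.pi)) * Real.exp (-t ^ 2 / 2)

/-!
Pass through the intermediate point `x / σ∖` with `x = l + 1/2 - μ`. From `x / σ` to `x / σ∖` the
argument is only rescaled, so the segment stays on the side of `x / σ` away from `0`, where the
density is at most `φ(x / σ)`; the length of the segment is `|x / σ| (σ - σ∖) / σ∖`, and
`u φ(u) ≤ φ(1) = e^{-1/2} / √(2π)` together with `(σ - σ∖) / σ∖ ≤ q(1-q) / σ∖² ≤ (1/4) / (σ² - 1/4)`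
gives the first term. From `x / σ∖` to `(x + q) / σ∖` the argument moves by `q / σ∖ ≤ 1 / √(σ² - 1/4)`
and `φ ≤ 1 / √(2π)` everywhere, which gives the second term.
-/

open MeasureTheory Set

noncomputable def stdNormalPDF (t : ℝ) : ℝ :=
  (1 / √(2 * π)) * exp (-t ^ 2 / 2)

lemma integrable_stdNormalPDF : Integrable stdNormalPDF := by
  have h := (integrable_exp_neg_mul_sq (by norm_num : (0 : ℝ) < 1 / 2)).const_mul
    (1 / √(2 * π))
  convert h using 2 with t
  rw [stdNormalPDF]; ring_nf

lemma stdNormalPDF_nonneg (t : ℝ) : 0 ≤ stdNormalPDF t := by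
  unfold stdNormalPDF; positivity

lemma stdNormalPDF_le_of_abs_le {a t : ℝ} (h : |a| ≤ |t|) : stdNormalPDF t ≤ stdNormalPDF a := by
  unfold stdNormalPDF
  gcongr ?_ * exp ?_
  nlinarith [sq_le_sq.2 h]

lemma stdNormalPDF_le (t : ℝ) : stdNormalPDF t ≤ 1 / √(2 * π) := by
  simpa [stdNormalPDF] using stdNormalPDF_le_of_abs_le (a := 0) (t := t) (by simp)

lemma stdNormalCDF_sub_stdNormalCDF (a b : ℝ) :
    stdNormalCDF b - stdNormalCDF a = ∫ t in a..b, stdNormalPDF t := by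
  simp only [stdNormalCDF, ← integral_Iic_eq_integral_Iio]
  exact intervalIntegral.integral_Iic_sub_Iic integrable_stdNormalPDF.integrableOn
    integrable_stdNormalPDF.integrableOn

lemma abs_stdNormalCDF_sub_le {a b C : ℝ} (h : ∀ t ∈ uIoc a b, stdNormalPDF t ≤ C) :
    |stdNormalCDF a - stdNormalCDF b| ≤ C * |a - b| := by
  rw [← Real.norm_eq_abs, ← norm_neg, neg_sub, stdNormalCDF_sub_stdNormalCDF, abs_sub_comm]
  refine intervalIntegral.norm_integral_le_of_norm_le_const fun t ht => ?_
  rw [Real.norm_of_nonneg (stdNormalPDF_nonneg t)]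
  exact h t ht

lemma abs_stdNormalCDF_sub_le_abs_sub (a b : ℝ) :
    |stdNormalCDF a - stdNormalCDF b| ≤ 1 / √(2 * π) * |a - b| :=
  abs_stdNormalCDF_sub_le fun t _ => stdNormalPDF_le t

lemma mul_exp_neg_sq_div_two_le (u : ℝ) : u * exp (-u ^ 2 / 2) ≤ exp (-(1 / 2)) := by
  have h : u ≤ exp ((u ^ 2 - 1) / 2) := by
    nlinarith [add_one_le_exp ((u ^ 2 - 1) / 2), sq_nonneg (u - 1)]
  calc u * exp (-u ^ 2 / 2) ≤ exp ((u ^ 2 - 1) / 2) * exp (-u ^ 2 / 2) := by gcongr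
    _ = exp (-(1 / 2)) := by rw [← Real.exp_add]; ring_nf

lemma abs_le_abs_of_mem_uIcc_mul {a r t : ℝ} (hr : 1 ≤ r) (ht : t ∈ uIcc a (r * a)) :
    |a| ≤ |t| := by
  rcases le_total 0 a with ha | ha
  · rw [uIcc_of_le (by nlinarith)] at ht
    rw [abs_of_nonneg ha, abs_of_nonneg (ha.trans ht.1)]; exact ht.1
  · rw [uIcc_of_ge (by nlinarith)] at ht
    rw [abs_of_nonpos ha, abs_of_nonpos (ht.2.trans ha)]; linarith [ht.2]

lemma abs_stdNormalCDF_div_sub_div_le {x s s' : ℝ} (hs' : 0 < s') (hss' : s' ≤ s) :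
    |stdNormalCDF (x / s) - stdNormalCDF (x / s')| ≤
      1 / √(2 * π) * exp (-(1 / 2)) * ((s - s') / s') := by
  have hs : 0 < s := hs'.trans_le hss'
  have hratio : x / s' = s / s' * (x / s) := by field_simp
  have hbound := abs_stdNormalCDF_sub_le (a := x / s) (b := x / s') (C := stdNormalPDF (x / s))
    fun t ht => stdNormalPDF_le_of_abs_le <| abs_le_abs_of_mem_uIcc_mul
      ((one_le_div hs').2 hss') (hratio ▸ uIoc_subset_uIcc ht)
  have hdiff : |x / s - x / s'| = |x / s| * ((s - s') / s') := by
    rw [show x / s - x / s' = -(x / s * ((s - s') / s')) by field_simp; ring, abs_neg, abs_mul,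
      abs_of_nonneg (div_nonneg (sub_nonneg.2 hss') hs'.le)]
  have hpeak := mul_exp_neg_sq_div_two_le |x / s|
  rw [sq_abs] at hpeak
  calc _ ≤ _ := hbound
    _ = 1 / √(2 * π) * (|x / s| * exp (-(x / s) ^ 2 / 2)) * ((s - s') / s') := by
        rw [hdiff, stdNormalPDF]; ring
    _ ≤ _ := by
        have : 0 ≤ (s - s') / s' := div_nonneg (by linarith) hs'.le
        gcongr

lemma sqrt_sub_sqrt_sub_div_le {σ d e : ℝ} (hd : 0 ≤ d) (hde : d ≤ e) (heσ : e < σ) :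
    (√σ - √(σ - d)) / √(σ - d) ≤ e / (σ - e) := by
  have hs' : 0 < √(σ - d) := Real.sqrt_pos.2 (by linarith)
  have hss' : √(σ - d) ≤ √σ := Real.sqrt_le_sqrt (by linarith)
  have hsq : √σ ^ 2 = σ := Real.sq_sqrt (by linarith)
  have hsq' : √(σ - d) ^ 2 = σ - d := Real.sq_sqrt (by linarith)
  set s := √σ
  set s' := √(σ - d)
  calc (s - s') / s' ≤ d / (σ - d) := by
        rw [div_le_div_iff₀ hs' (by linarith), ← hsq', show d = s ^ 2 - s' ^ 2 by linarith]
        nlinarith [mul_nonneg (mul_nonneg (sub_nonneg.2 hss') hs'.le) (hs'.le.trans hss')]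
    _ ≤ e / (σ - e) := div_le_div₀ (by linarith) hde (by linarith) (by linarith)

lemma abs_stdNormalCDF_div_sqrt_sub_le (x : ℝ) {σ d e : ℝ} (hd : 0 ≤ d) (hde : d ≤ e)
    (heσ : e < σ) :
    |stdNormalCDF (x / √σ) - stdNormalCDF (x / √(σ - d))| ≤
      1 / √(2 * π) * exp (-(1 / 2)) * (e / (σ - e)) := by
  refine (abs_stdNormalCDF_div_sub_div_le (Real.sqrt_pos.2 (by linarith))
    (Real.sqrt_le_sqrt (by linarith))).trans ?_
  exact mul_le_mul_of_nonneg_left (sqrt_sub_sqrt_sub_div_le hd hde heσ) (by positivity)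

lemma abs_stdNormalCDF_div_sub_add_div_le (y : ℝ) {q v D : ℝ} (hq : q ∈ Icc (0 : ℝ) 1)
    (hD : 0 < D) (hDv : D ≤ v) :
    |stdNormalCDF (y / √v) - stdNormalCDF ((y + q) / √v)| ≤
      1 / √(2 * π) * (1 / √D) := by
  have hv : 0 < √v := Real.sqrt_pos.2 (hD.trans_le hDv)
  refine (abs_stdNormalCDF_sub_le_abs_sub _ _).trans ?_
  rw [← sub_div, show y - (y + q) = -q by ring, abs_div, abs_neg, abs_of_nonneg hq.1,
    abs_of_pos hv]
  gcongr
  exact hq.2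

/-- **Gaussian CDF perturbation bound for the blind approximation.** For `μ ∈ ℝ`,
`q ∈ [0,1]`, `σ² > 1/4`, with `σ∖² = σ² - q(1-q)`, `μ∖ = μ - q`,
`I = (l + 1/2 - μ)/σ` and `I∖ = (l + 1/2 - μ∖)/σ∖`, we have
`|Φ(I) - Φ(I∖)| ≤ (1/(4√(2π))) · 1/(√e (σ²-1/4)) + (1/√(2π)) · 1/√(σ²-1/4)`. -/
theorem gaussian_cdf_perturbation (μ : ℝ) (q : ℝ) (hq : q ∈ Set.Icc (0 : ℝ) 1)
    (σsq : ℝ) (hσ : 1 / 4 < σsq) (l : ℝ) :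
    |stdNormalCDF ((l + 1 / 2 - μ) / Real.sqrt σsq) -
        stdNormalCDF ((l + 1 / 2 - (μ - q)) / Real.sqrt (σsq - q * (1 - q)))| ≤
      (1 / (4 * Real.sqrt (2 * Real.pi))) * (1 / (Real.sqrt (Real.exp 1) * (σsq - 1 / 4)))
        + (1 / Real.sqrt (2 * Real.pi)) * (1 / Real.sqrt (σsq - 1 / 4)) := by
  have hvar_nonneg : 0 ≤ q * (1 - q) := mul_nonneg hq.1 (by linarith [hq.2])
  have hvar_le : q * (1 - q) ≤ 1 / 4 := by nlinarith [sq_nonneg (q - 1 / 2)]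
  set x := l + 1 / 2 - μ
  set s' := Real.sqrt (σsq - q * (1 - q))
  rw [show l + 1 / 2 - (μ - q) = x + q by ring]
  have hscale := abs_stdNormalCDF_div_sqrt_sub_le x hvar_nonneg hvar_le hσ
  have hshift := abs_stdNormalCDF_div_sub_add_div_le x hq (by linarith : 0 < σsq - 1 / 4)
    (by linarith : σsq - 1 / 4 ≤ σsq - q * (1 - q))
  have hconst : 1 / √(2 * π) * exp (-(1 / 2)) * (1 / 4 / (σsq - 1 / 4)) =
      1 / (4 * √(2 * π)) * (1 / (√(exp 1) * (σsq - 1 / 4))) := by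
    rw [Real.exp_neg, ← Real.exp_half]
    field_simp
  calc _ ≤ |stdNormalCDF (x / √σsq) - stdNormalCDF (x / s')| +
        |stdNormalCDF (x / s') - stdNormalCDF ((x + q) / s')| := abs_sub_le _ _ _
    _ ≤ _ := hconst ▸ add_le_add hscale hshift
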